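/- Let G be a graph with chromatic index χ'(G) and let k ≥ χ'(G). Then G has a proper k-edge-coloring in which every color class has size ⌊|E(G)|/k⌋ or ⌈|E(G)|/k⌉. -/

import Mathlib

/-- A proper edge-coloring of `G` with colors in `Fin m`, assigning a color to every
edge so that edges sharing a vertex receive distinct colors. -/
def IsProperEdgeColoring {V : Type*} (G : SimpleGraph V) {m : ℕ}
    (c : G.edgeSet → Fin m) : Prop :=
  ∀ e f : G.edgeSet, e ≠ f → (∃ v : V, v ∈ (e : Sym2 V) ∧ v ∈ (f : Sym2 V)) → c e ≠ c f

/-- The chromatic index of `G`. -/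
noncomputable def edgeChromaticNumber {V : Type*} (G : SimpleGraph V) : ℕ :=
  sInf {m | ∃ c : G.edgeSet → Fin m, IsProperEdgeColoring G c}

/-! Start from a proper colouring with `χ'(G) ≤ k` colours, viewed as a `k`-colouring. While two
colour classes satisfy `#Eⱼ + 1 < #Eᵢ`, some component of the subgraph of `i`- and `j`-edges
(a Kempe chain) has exactly one more `i`-edge than `j`-edges: in every chain the `i`-edges form
a matching, so `2 #i ≤ #vertices ≤ #edges + 1 = #i + #j + 1`, and summing over the chains shows
that some chain has `#i > #j`. Swapping `i` and `j` on that chain keeps the colouring proper and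
strictly decreases `∑ₗ #Eₗ²`. When all class sizes differ by at most one, each of them is
`⌊|E|/k⌋` or `⌈|E|/k⌉`. -/

open Finset SimpleGraph

lemma sum_sq_lt_of_transfer {ι : Type*} [Fintype ι] [DecidableEq ι] {f g : ι → ℕ} {i j : ι}
    (hij : i ≠ j) (hi : g i + 1 = f i) (hj : g j = f j + 1) (hji : f j + 1 < f i)
    (hrest : ∀ l, l ≠ i → l ≠ j → g l = f l) :
    ∑ l, g l ^ 2 < ∑ l, f l ^ 2 := by
  have hj_mem : j ∈ univ.erase i := mem_erase.mpr ⟨hij.symm, mem_univ j⟩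
  rw [← add_sum_erase _ _ (mem_univ i), ← add_sum_erase _ _ hj_mem,
    ← add_sum_erase _ _ (mem_univ i), ← add_sum_erase _ _ hj_mem,
    sum_congr rfl fun l hl => by
      rw [hrest l (ne_of_mem_erase (mem_of_mem_erase hl)) (ne_of_mem_erase hl)]]
  nlinarith

lemma Set.EquitableOn.eq_div_or_eq_ceil_div {ι : Type*} [Fintype ι] {f : ι → ℕ}
    (h : (Set.univ : Set ι).EquitableOn f) (a : ι) :
    f a = (∑ l, f l) / Fintype.card ι ∨
      f a = (∑ l, f l + Fintype.card ι - 1) / Fintype.card ι := by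
  rw [← coe_univ] at h
  have hlow := Finset.EquitableOn.le h (Finset.mem_univ a)
  have hhigh := Finset.EquitableOn.le_add_one h (Finset.mem_univ a)
  have hsum : Fintype.card ι * f a < ∑ l, f l + Fintype.card ι := by
    calc Fintype.card ι * f a = ∑ _l : ι, f a := by simp
      _ < ∑ l, (f l + 1) :=
        sum_lt_sum (fun l _ => h (Finset.mem_univ a) (Finset.mem_univ l))
          ⟨a, Finset.mem_univ a, by omega⟩
      _ = ∑ l, f l + Fintype.card ι := by simp [sum_add_distrib]
  rw [card_univ] at hlow hhigh
  set m := ∑ l, f l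
  set n := Fintype.card ι
  have hrem : m < m / n * n + n := Nat.lt_div_mul_add (Fintype.card_pos_iff.mpr ⟨a⟩)
  rcases Nat.le_and_le_add_one_iff.mp ⟨hlow, hhigh⟩ with hfa | hfa
  · exact Or.inl hfa
  refine Or.inr (hfa.trans (Nat.div_eq_of_lt_le ?_ ?_).symm)
  all_goals
    rw [hfa, mul_comm] at hsum
    simp only [add_mul, one_mul] at hsum ⊢
    omega

section EdgeColoring

variable {V : Type*} {G : SimpleGraph V} {k : ℕ}

lemma IsProperEdgeColoring.comp_injective {m : ℕ} {c : G.edgeSet → Fin m}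
    (hc : IsProperEdgeColoring G c) {f : Fin m → Fin k} (hf : Function.Injective f) :
    IsProperEdgeColoring G (f ∘ c) :=
  fun e e' hne hshare => hf.ne (hc e e' hne hshare)

lemma exists_isProperEdgeColoring_edgeChromaticNumber (G : SimpleGraph V) [Finite G.edgeSet] :
    ∃ c : G.edgeSet → Fin (edgeChromaticNumber G), IsProperEdgeColoring G c :=
  Nat.sInf_mem (s := {m | ∃ c : G.edgeSet → Fin m, IsProperEdgeColoring G c})
    ⟨_, Finite.equivFin _, fun _ _ hne _ h => hne ((Finite.equivFin _).injective h)⟩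

end EdgeColoring

section KempeChain

variable {V : Type*} {G : SimpleGraph V} {k : ℕ}

def kempeGraph (c : G.edgeSet → Fin k) (i j : Fin k) : SimpleGraph V :=
  fromEdgeSet {e | ∃ h : e ∈ G.edgeSet, c ⟨e, h⟩ = i ∨ c ⟨e, h⟩ = j}

/-- Only meaningful for edges coloured `i` or `j` (see `kempeChain_eq`). -/
noncomputable def kempeChain (c : G.edgeSet → Fin k) (i j : Fin k) (e : G.edgeSet) :
    (kempeGraph c i j).ConnectedComponent :=
  (kempeGraph c i j).connectedComponentMk (e : Sym2 V).out.1

open Classical in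
noncomputable def kempeSwitch (c : G.edgeSet → Fin k) (i j : Fin k)
    (S : (kempeGraph c i j).ConnectedComponent) (e : G.edgeSet) : Fin k :=
  if kempeChain c i j e = S then Equiv.swap i j (c e) else c e

variable {c : G.edgeSet → Fin k} {i j : Fin k}

lemma mem_kempeGraph_edgeSet {e : Sym2 V} :
    e ∈ (kempeGraph c i j).edgeSet ↔
      ∃ h : e ∈ G.edgeSet, c ⟨e, h⟩ = i ∨ c ⟨e, h⟩ = j := by
  rw [kempeGraph, edgeSet_fromEdgeSet, Set.mem_sdiff]
  exact and_iff_left_of_imp fun ⟨h, _⟩ => G.not_isDiag_of_mem_edgeSet h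

lemma kempeChain_eq {e : G.edgeSet} (he : c e = i ∨ c e = j) {v : V}
    (hv : v ∈ (e : Sym2 V)) :
    kempeChain c i j e = (kempeGraph c i j).connectedComponentMk v := by
  obtain huv | huv := eq_or_ne (e : Sym2 V).out.1 v
  · rw [kempeChain, huv]
  refine ConnectedComponent.connectedComponentMk_eq_of_adj ?_
  rw [← mem_edgeSet, ← (Sym2.mem_and_mem_iff huv).mp ⟨Sym2.out_fst_mem _, hv⟩]
  exact mem_kempeGraph_edgeSet.mpr ⟨e.2, he⟩

/-- A Kempe switch keeps a colouring proper: an edge whose colour it changes and an adjacent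
edge whose colour it keeps cannot both be coloured `i` or `j`, since they would lie in the same
Kempe chain. -/
lemma IsProperEdgeColoring.kempeSwitch (hc : IsProperEdgeColoring G c)
    (S : (kempeGraph c i j).ConnectedComponent) :
    IsProperEdgeColoring G (kempeSwitch c i j S) := by
  rintro e f hef ⟨v, hve, hvf⟩
  have hne := hc e f hef ⟨v, hve, hvf⟩
  have hchain (he : c e = i ∨ c e = j) (hf : c f = i ∨ c f = j) :
      kempeChain c i j e = kempeChain c i j f :=
    (kempeChain_eq he hve).trans (kempeChain_eq hf hvf).symm
  unfold _root_.kempeSwitch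
  split_ifs with he hf hf
  · exact (Equiv.swap i j).injective.ne hne
  · grind
  · grind
  · exact hne

end KempeChain

section Counting

open Classical

variable {V : Type*} {G : SimpleGraph V} [Fintype G.edgeSet] {k : ℕ} {c : G.edgeSet → Fin k}
  {i j : Fin k}

lemma card_kempeSwitch_add (S : (kempeGraph c i j).ConnectedComponent) (l : Fin k) :
    #{e | kempeSwitch c i j S e = l} + #{e | c e = l ∧ kempeChain c i j e = S} =
      #{e | c e = l} + #{e | c e = Equiv.swap i j l ∧ kempeChain c i j e = S} := by
  have hsplit (p : G.edgeSet → Prop) [DecidablePred p] :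
      #{e | p e} =
        #{e | p e ∧ kempeChain c i j e = S} + #{e | p e ∧ kempeChain c i j e ≠ S} := by
    rw [← filter_filter, ← filter_filter, card_filter_add_card_filter_not]
  have hin : #{e | kempeSwitch c i j S e = l ∧ kempeChain c i j e = S} =
      #{e | c e = Equiv.swap i j l ∧ kempeChain c i j e = S} := by
    refine congrArg card (filter_congr fun e _ => ?_)
    by_cases h : kempeChain c i j e = S <;> simp [kempeSwitch, h, Equiv.swap_apply_eq_iff]
  have hout : #{e | kempeSwitch c i j S e = l ∧ kempeChain c i j e ≠ S} =
      #{e | c e = l ∧ kempeChain c i j e ≠ S} := by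
    refine congrArg card (filter_congr fun e _ => ?_)
    by_cases h : kempeChain c i j e = S <;> simp [kempeSwitch, h]
  rw [hsplit (kempeSwitch c i j S · = l), hsplit (c · = l), hin, hout]
  ring

lemma two_mul_card_kempeChain_le [Finite V] (hc : IsProperEdgeColoring G c)
    (S : (kempeGraph c i j).ConnectedComponent) :
    2 * #{e | c e = i ∧ kempeChain c i j e = S} ≤ Nat.card S.supp := by
  have := Fintype.ofFinite S.supp
  set A : Finset G.edgeSet := {e | c e = i ∧ kempeChain c i j e = S}
  have hdisj : (A : Set G.edgeSet).PairwiseDisjoint fun e => (e : Sym2 V).toFinset := by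
    intro e he f hf hef
    refine disjoint_left.mpr fun v hve hvf => ?_
    simp only [A, coe_filter, mem_univ, true_and] at he hf
    exact hc e f hef ⟨v, Sym2.mem_toFinset.mp hve, Sym2.mem_toFinset.mp hvf⟩
      (he.1.trans hf.1.symm)
  have hsupp : A.biUnion (fun e => (e : Sym2 V).toFinset) ⊆ S.supp.toFinset := by
    intro v hv
    obtain ⟨e, he, hve⟩ := mem_biUnion.mp hv
    simp only [A, mem_filter, mem_univ, true_and] at he
    rw [Set.mem_toFinset, ConnectedComponent.mem_supp_iff, ← he.2,
      kempeChain_eq (Or.inl he.1) (Sym2.mem_toFinset.mp hve)]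
  calc 2 * #A = ∑ e ∈ A, #(e : Sym2 V).toFinset := by
        rw [sum_congr rfl fun e _ => Sym2.card_toFinset_of_not_isDiag _
          (G.not_isDiag_of_mem_edgeSet e.2), sum_const, smul_eq_mul, mul_comm]
    _ = #(A.biUnion fun e => (e : Sym2 V).toFinset) := (card_biUnion hdisj).symm
    _ ≤ Nat.card S.supp := by
        rw [Nat.card_eq_card_toFinset]; exact card_le_card hsupp

lemma card_supp_le_card_kempeChain_add_one (S : (kempeGraph c i j).ConnectedComponent) :
    Nat.card S.supp ≤ #{e | (c e = i ∨ c e = j) ∧ kempeChain c i j e = S} + 1 := by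
  refine S.connected_toSimpleGraph.card_vert_le_card_edgeSet_add_one.trans
    (Nat.add_le_add_right ?_ 1)
  rw [← Fintype.card_subtype, ← Nat.card_eq_fintype_card]
  have hmem (e : S.toSimpleGraph.edgeSet) :
      ∃ h : (e : Sym2 S).map Subtype.val ∈ G.edgeSet, c ⟨_, h⟩ = i ∨ c ⟨_, h⟩ = j :=
    mem_kempeGraph_edgeSet.mp (S.toSimpleGraph_hom.map_mem_edgeSet e.2)
  refine Nat.card_le_card_of_injective
    (fun e => ⟨⟨_, (hmem e).1⟩, (hmem e).2, ?_⟩) fun e f hef => ?_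
  · rw [kempeChain_eq (hmem e).2 (Sym2.mem_map.mpr ⟨_, Sym2.out_fst_mem _, rfl⟩)]
    exact ((e : Sym2 S).out.1).2
  · exact Subtype.ext (Sym2.map.injective Subtype.val_injective (congrArg (·.1.1) hef))

lemma card_kempeChain_le_add_one [Finite V] (hc : IsProperEdgeColoring G c)
    (S : (kempeGraph c i j).ConnectedComponent) :
    #{e | c e = i ∧ kempeChain c i j e = S} ≤
      #{e | c e = j ∧ kempeChain c i j e = S} + 1 := by
  have hunion : #{e | (c e = i ∨ c e = j) ∧ kempeChain c i j e = S} ≤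
      #{e | c e = i ∧ kempeChain c i j e = S} + #{e | c e = j ∧ kempeChain c i j e = S} := by
    simp only [or_and_right, filter_or]
    exact card_union_le _ _
  have := two_mul_card_kempeChain_le hc S
  have := card_supp_le_card_kempeChain_add_one (c := c) S
  omega

lemma exists_kempeChain_card_eq_add_one [Finite V] (hc : IsProperEdgeColoring G c)
    (hlt : #{e | c e = j} < #{e | c e = i}) :
    ∃ S : (kempeGraph c i j).ConnectedComponent,
      #{e | c e = i ∧ kempeChain c i j e = S} =
        #{e | c e = j ∧ kempeChain c i j e = S} + 1 := by
  have hfiber (l : Fin k) : #{e | c e = l} = ∑ S ∈ univ.image (kempeChain c i j),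
      #{e | c e = l ∧ kempeChain c i j e = S} := by
    rw [card_eq_sum_card_fiberwise (f := kempeChain c i j) fun e _ =>
      mem_image_of_mem _ (mem_univ e)]
    simp only [filter_filter]
  rw [hfiber, hfiber] at hlt
  obtain ⟨S, -, hS⟩ := exists_lt_of_sum_lt hlt
  exact ⟨S, le_antisymm (card_kempeChain_le_add_one hc S) hS⟩

end Counting

theorem IsProperEdgeColoring.exists_equitableOn {V : Type*} [Finite V] {G : SimpleGraph V}
    [Fintype G.edgeSet] {k : ℕ} {c : G.edgeSet → Fin k} (hc : IsProperEdgeColoring G c) :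
    ∃ c' : G.edgeSet → Fin k, IsProperEdgeColoring G c' ∧
      (Set.univ : Set (Fin k)).EquitableOn fun l => #{e | c' e = l} := by
  induction hN : ∑ l, #{e | c e = l} ^ 2 using Nat.strong_induction_on generalizing c with
  | _ N ih =>
  by_cases hequitable : (Set.univ : Set (Fin k)).EquitableOn fun l => #{e | c e = l}
  · exact ⟨c, hc, hequitable⟩
  obtain ⟨i, -, j, -, hji⟩ := Set.not_equitableOn.mp hequitable
  have hij : i ≠ j := by rintro rfl; omega
  obtain ⟨S, hS⟩ := exists_kempeChain_card_eq_add_one hc (i := i) (j := j) (by omega)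
  have hcount := card_kempeSwitch_add (c := c) S
  refine ih _ (hN ▸ sum_sq_lt_of_transfer hij ?_ ?_ hji ?_) (hc.kempeSwitch S) rfl
  · have := hcount i
    rw [Equiv.swap_apply_left] at this
    omega
  · have := hcount j
    rw [Equiv.swap_apply_right] at this
    omega
  · intro l hli hlj
    have := hcount l
    rw [Equiv.swap_apply_of_ne_of_ne hli hlj] at this
    omega

/-- McDiarmid's equitable edge-coloring theorem: for every `k ≥ χ'(G)`, the graph `G`
has a proper `k`-edge-coloring in which every color class has size
`⌊|E(G)|/k⌋` or `⌈|E(G)|/k⌉`. -/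
theorem equitable_edge_coloring {V : Type*} [Fintype V] [DecidableEq V]
    (G : SimpleGraph V) [DecidableRel G.Adj] (k : ℕ) (hk : edgeChromaticNumber G ≤ k) :
    ∃ c : G.edgeSet → Fin k, IsProperEdgeColoring G c ∧
      ∀ i : Fin k,
        (Finset.univ.filter fun e : G.edgeSet => c e = i).card = G.edgeFinset.card / k ∨
        (Finset.univ.filter fun e : G.edgeSet => c e = i).card = (G.edgeFinset.card + k - 1) / k := by
  obtain ⟨c₀, hc₀⟩ := exists_isProperEdgeColoring_edgeChromaticNumber G
  obtain ⟨c, hc, hequitable⟩ :=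
    (hc₀.comp_injective (Fin.castLE_injective hk)).exists_equitableOn
  have hsum : ∑ l, #{e | c e = l} = #G.edgeFinset := by
    rw [edgeFinset_card, ← card_univ, card_eq_sum_card_fiberwise fun e _ => mem_univ (c e)]
  refine ⟨c, hc, fun l => ?_⟩
  simpa only [hsum, Fintype.card_fin] using hequitable.eq_div_or_eq_ceil_div l
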